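/- arXiv:math/0510325 — 2 statements merged into one kernel-verified Lean document; each statement's English description precedes it below -/
import Mathlib

section
/- Let A be an associative unital K-algebra over a field K of characteristic zero, containing elements η_1, η_2, … that pairwise anticommute (η_i η_j = −η_j η_i, η_i² = 0). Then for every integer N, ∑_{i + j + l = N} (i + j − 2 − l) · i · η_i η_j η_l = 0, where the sum is over ordered triples of positive integers (i, j, l) with i + j + l = N. -/
/-!
Write `i + j - 2 - l = (N - 2) - 2 l` on the support. The part `(N - 2) i η_i η_j η_l` has a
coefficient symmetric in `j ↔ l` while the monomial is antisymmetric in `j ↔ l`; the part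
`-2 l i η_i η_j η_l` has a coefficient symmetric in `i ↔ l` while the monomial is antisymmetric
in `i ↔ l`. So each part equals its own negative, hence vanishes, as `A` is a vector space over
a field of characteristic zero.
-/

open Finset

section Anticommuting

variable {ι R : Type*} [Ring R] {η : ι → R}

lemma mul_mul_swap_right_of_anticomm (hanti : ∀ i j, η i * η j = -(η j * η i)) (i j l : ι) :
    η i * η l * η j = -(η i * η j * η l) := by
  rw [mul_assoc, hanti l j, mul_neg, mul_assoc]

lemma mul_mul_reverse_of_anticomm (hanti : ∀ i j, η i * η j = -(η j * η i)) (i j l : ι) :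
    η l * η j * η i = -(η i * η j * η l) := by
  rw [mul_mul_swap_right_of_anticomm hanti, hanti l i, neg_mul,
    mul_mul_swap_right_of_anticomm hanti, neg_neg]

end Anticommuting

lemma Finset.sum_Ico_one_reflect {M : Type*} [AddCommMonoid M] (n : ℕ) (g : ℕ → ℕ → M) :
    ∑ j ∈ Ico 1 n, g j (n - j) = ∑ j ∈ Ico 1 n, g (n - j) j := by
  refine sum_nbij' (n - ·) (n - ·) ?_ ?_ ?_ ?_ ?_ <;> intro j hj <;>
    simp only [mem_Ico] at hj ⊢
  all_goals first | omega | rw [Nat.sub_sub_self (by omega)]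

/-- The sum of `F i j l` over ordered triples of positive integers with `i + j + l = N`. -/
def tripleSum {M : Type*} [AddCommMonoid M] (N : ℕ) (F : ℕ → ℕ → ℕ → M) : M :=
  ∑ i ∈ Ico 1 N, ∑ j ∈ Ico 1 (N - i), F i j (N - i - j)

namespace tripleSum

section AddCommMonoid

variable {M : Type*} [AddCommMonoid M] (N : ℕ) (F : ℕ → ℕ → ℕ → M)

lemma congr {G : ℕ → ℕ → ℕ → M} (h : ∀ i j l, i + j + l = N → F i j l = G i j l) :
    tripleSum N F = tripleSum N G :=
  sum_congr rfl fun i hi => sum_congr rfl fun j hj => by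
    simp only [mem_Ico] at hi hj
    exact h i j _ (by omega)

lemma add (G : ℕ → ℕ → ℕ → M) :
    tripleSum N (fun i j l => F i j l + G i j l) = tripleSum N F + tripleSum N G := by
  simp only [tripleSum, sum_add_distrib]

lemma swap₂₃ : tripleSum N (fun i j l => F i l j) = tripleSum N F :=
  sum_congr rfl fun i _ => (sum_Ico_one_reflect (N - i) (F i)).symm

lemma sum_comm : tripleSum N F = ∑ j ∈ Ico 1 N, ∑ i ∈ Ico 1 (N - j), F i j (N - i - j) :=
  Finset.sum_comm' fun i j => by simp only [mem_Ico]; omega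

lemma swap₁₃ : tripleSum N (fun i j l => F l j i) = tripleSum N F := by
  rw [sum_comm, sum_comm]
  refine sum_congr rfl fun j _ => ?_
  simp only [Nat.sub_right_comm N _ j]
  exact sum_Ico_one_reflect (N - j) (fun i l => F l j i)

end AddCommMonoid

section AddCommGroup

variable {M : Type*} [AddCommGroup M] (N : ℕ)

lemma neg (F : ℕ → ℕ → ℕ → M) :
    tripleSum N (fun i j l => -F i j l) = -tripleSum N F := by
  simp only [tripleSum, sum_neg_distrib]

variable [IsAddTorsionFree M] {F : ℕ → ℕ → ℕ → M}

lemma eq_zero_of_swap₂₃ (h : ∀ i j l, F i l j = -F i j l) : tripleSum N F = 0 := by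
  refine self_eq_neg.mp ?_
  calc tripleSum N F = tripleSum N _ := (swap₂₃ N F).symm
    _ = -tripleSum N F := by rw [funext₃ h, neg]

lemma eq_zero_of_swap₁₃ (h : ∀ i j l, F l j i = -F i j l) : tripleSum N F = 0 := by
  refine self_eq_neg.mp ?_
  calc tripleSum N F = tripleSum N _ := (swap₁₃ N F).symm
    _ = -tripleSum N F := by rw [funext₃ h, neg]

end AddCommGroup

end tripleSum

/-- For pairwise anticommuting `η_i` in a `K`-algebra, `K` of characteristic zero,
`∑_{i+j+l=N} (i+j-2-l)·i·η_i η_j η_l = 0`, the sum over ordered triples of positive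
integers with `i+j+l = N`. -/
theorem stmt3 (K : Type*) [Field K] [CharZero K] (A : Type*) [Ring A] [Algebra K A]
    (η : ℕ → A) (hanti : ∀ i j, η i * η j = -(η j * η i)) :
    ∀ N : ℕ, ∑ i ∈ Finset.Ico 1 N, ∑ j ∈ Finset.Ico 1 (N - i),
      ((((i : K) + (j : K) - 2 - ((N - i - j : ℕ) : K)) * (i : K)) •
        (η i * η j * η (N - i - j))) = 0 := by
  intro N
  have : IsAddTorsionFree A := .of_isTorsionFree K A
  change tripleSum N (fun i j l => (((i : K) + j - 2 - l) * i) • (η i * η j * η l)) = 0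
  have split : ∀ i j l, i + j + l = N →
      (((i : K) + j - 2 - l) * i) • (η i * η j * η l) =
        (((N : K) - 2) * i) • (η i * η j * η l) + (-2 * (l : K) * i) • (η i * η j * η l) := by
    intro i j l hN
    rw [← add_smul, ← hN]
    congr 1
    push_cast
    ring
  rw [tripleSum.congr N _ split, tripleSum.add,
    tripleSum.eq_zero_of_swap₂₃ N fun i j l => by
      rw [mul_mul_swap_right_of_anticomm hanti, smul_neg],
    tripleSum.eq_zero_of_swap₁₃ N fun i j l => by
      rw [mul_mul_reverse_of_anticomm hanti, smul_neg, mul_right_comm],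
    add_zero]
end

section
/- Let A be an associative unital K-algebra over a field K of characteristic zero with mutually anticommuting elements η_1, η_2, …. For m ≥ 0 define z_m = −∑_{k + l = m + 3} k η_k η_l (sum over positive integers k, l). Then for every integer n, ∑_{i + j = n + 2} (j − i) η_i z_{j−1} = 0. -/
/-- With pairwise anticommuting `η_i` and `z_m = -∑_{k+l=m+3} k η_k η_l`, one has
`∑_{i+j=n+2} (j-i) η_i z_{j-1} = 0` for every `n`. -/
theorem stmt6 (K : Type*) [Field K] [CharZero K] (A : Type*) [Ring A] [Algebra K A]
    (η : ℕ → A) (hanti : ∀ i j, η i * η j = -(η j * η i))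
    (z : ℕ → A)
    (hz : ∀ m : ℕ, z m = -∑ k ∈ Finset.Ico 1 (m + 3), (k : K) • (η k * η (m + 3 - k))) :
    ∀ n : ℕ, ∑ i ∈ Finset.Ico 1 (n + 2),
      ((((n + 2 - i : ℕ) : K) - (i : K)) • (η i * z (n + 2 - i - 1))) = 0 := by
  have hsq : ∀ j, η j * η j = 0 := by
    intro j
    have h2 : (2 : K) • (η j * η j) = 0 := by
      rw [two_smul]
      nth_rewrite 1 [hanti j j]
      exact neg_add_cancel _
    rcases smul_eq_zero.mp h2 with h | h
    · exact absurd h two_ne_zero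
    · exact h
  intro n
  -- rewrite each summand via hz
  have step1 : ∀ i ∈ Finset.Ico 1 (n+2),
      (((n + 2 - i : ℕ) : K) - (i : K)) • (η i * z (n + 2 - i - 1))
      = ∑ k ∈ Finset.Ico 1 (n+4-i),
          (-((((n:K)+2) - 2*(i:K)) * (k:K))) • (η i * (η k * η (n+4-i-k))) := by
    intro i hi
    simp only [Finset.mem_Ico] at hi
    have h1 : n + 2 - i - 1 = n + 1 - i := by omega
    have h2 : n + 1 - i + 3 = n + 4 - i := by omega
    rw [h1, hz, h2, mul_neg, smul_neg, Finset.mul_sum, Finset.smul_sum, ← Finset.sum_neg_distrib]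
    refine Finset.sum_congr rfl fun k hk => ?_
    rw [mul_smul_comm, smul_smul, ← neg_smul]
    congr 1
    have hc : ((n + 2 - i : ℕ) : K) = (n:K) + 2 - (i:K) := by
      rw [Nat.cast_sub (by omega)]; push_cast; ring
    rw [hc]; ring
  rw [Finset.sum_congr rfl step1]
  -- extend the outer range to include i = n+2 (the extra term vanishes)
  have extra : (∑ k ∈ Finset.Ico 1 (n+4-(n+2)),
      (-((((n:K)+2) - 2*((n+2:ℕ):K)) * (k:K))) • (η (n+2) * (η k * η (n+4-(n+2)-k)))) = 0 := by
    have h4 : n + 4 - (n+2) = 2 := by omega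
    rw [h4]
    rw [show Finset.Ico 1 2 = {1} from rfl, Finset.sum_singleton]
    have h21 : (2:ℕ) - 1 = 1 := rfl
    rw [h21, hsq 1, mul_zero, smul_zero]
  have hext : (∑ i ∈ Finset.Ico 1 (n+2), ∑ k ∈ Finset.Ico 1 (n+4-i),
      (-((((n:K)+2) - 2*(i:K)) * (k:K))) • (η i * (η k * η (n+4-i-k))))
      = ∑ i ∈ Finset.Ico 1 (n+3), ∑ k ∈ Finset.Ico 1 (n+4-i),
      (-((((n:K)+2) - 2*(i:K)) * (k:K))) • (η i * (η k * η (n+4-i-k))) := by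
    conv_rhs => rw [show n+3 = (n+2)+1 from rfl, Finset.sum_Ico_succ_top (by omega)]
    rw [extra, add_zero]
  rw [hext, Finset.sum_sigma']
  -- split the coefficient into two antisymmetric pieces
  have split : ∀ p ∈ (Finset.Ico 1 (n+3)).sigma (fun i => Finset.Ico 1 (n+4-i)),
      (-((((n:K)+2) - 2*((p.1:ℕ):K)) * ((p.2:ℕ):K))) • (η p.1 * (η p.2 * η (n+4-p.1-p.2)))
      = (-(((n:K)+2) * ((p.2:ℕ):K))) • (η p.1 * (η p.2 * η (n+4-p.1-p.2)))
        + ((2*((p.1:ℕ):K)) * ((p.2:ℕ):K)) • (η p.1 * (η p.2 * η (n+4-p.1-p.2))) := by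
    intro p _
    rw [← add_smul]
    congr 1
    ring
  rw [Finset.sum_congr rfl split, Finset.sum_add_distrib]
  have key : ∀ i k l : ℕ, η i * (η k * η l) = -(η l * (η k * η i)) := by
    intro i k l
    rw [hanti k l, mul_neg, ← mul_assoc, hanti i l, neg_mul, neg_neg, mul_assoc,
      hanti i k, mul_neg]
  have key2 : ∀ i k l : ℕ, η i * (η k * η l) = -(η k * (η i * η l)) := by
    intro i k l
    rw [← mul_assoc, hanti i k, neg_mul, mul_assoc]
  have mem_iff : ∀ p : Σ _ : ℕ, ℕ,
      p ∈ (Finset.Ico 1 (n+3)).sigma (fun i => Finset.Ico 1 (n+4-i)) ↔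
      (1 ≤ p.1 ∧ 1 ≤ p.2 ∧ p.1 + p.2 ≤ n + 3) := by
    intro p
    simp only [Finset.mem_sigma, Finset.mem_Ico]
    omega
  have S1 : (∑ p ∈ (Finset.Ico 1 (n+3)).sigma (fun i => Finset.Ico 1 (n+4-i)),
      (-(((n:K)+2) * ((p.2:ℕ):K))) • (η p.1 * (η p.2 * η (n+4-p.1-p.2)))) = 0 := by
    refine Finset.sum_involution (fun p _ => ⟨n+4-p.1-p.2, p.2⟩) ?_ ?_ ?_ ?_
    · intro p hp
      rw [mem_iff] at hp
      have hl : n + 4 - (n+4-p.1-p.2) - p.2 = p.1 := by omega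
      dsimp only
      rw [hl, key p.1 p.2 (n+4-p.1-p.2), smul_neg, neg_add_cancel]
    · intro p hp hf heq
      apply hf
      have h1 : n + 4 - p.1 - p.2 = p.1 := by
        have := congrArg Sigma.fst heq; simpa using this
      rw [h1, hanti p.2 p.1, mul_neg, ← mul_assoc, hsq, zero_mul, neg_zero, smul_zero]
    · intro p hp
      rw [mem_iff] at hp ⊢
      dsimp only
      omega
    · intro p hp
      rw [mem_iff] at hp
      ext
      · dsimp only; omega
      · rfl
  have S2 : (∑ p ∈ (Finset.Ico 1 (n+3)).sigma (fun i => Finset.Ico 1 (n+4-i)),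
      ((2*((p.1:ℕ):K)) * ((p.2:ℕ):K)) • (η p.1 * (η p.2 * η (n+4-p.1-p.2)))) = 0 := by
    refine Finset.sum_involution (fun p _ => ⟨p.2, p.1⟩) ?_ ?_ ?_ ?_
    · intro p hp
      have hl : n + 4 - p.2 - p.1 = n + 4 - p.1 - p.2 := by omega
      dsimp only
      rw [hl, key2 p.1 p.2 (n+4-p.1-p.2)]
      rw [show (2*((p.2:ℕ):K)) * ((p.1:ℕ):K) = (2*((p.1:ℕ):K)) * ((p.2:ℕ):K) from by ring]
      rw [smul_neg]
      exact neg_add_cancel _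
    · intro p hp hf heq
      apply hf
      have h1 : p.2 = p.1 := by
        have := congrArg Sigma.fst heq; simpa using this
      rw [h1, ← mul_assoc, hsq, zero_mul, smul_zero]
    · intro p hp
      rw [mem_iff] at hp ⊢
      dsimp only
      omega
    · intro p hp
      ext <;> rfl
  rw [S1, S2, add_zero]
end
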